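/- arXiv:2510.20998 — 2 statements merged into one kernel-verified Lean document; each statement's English description precedes it below -/
import Mathlib

section
/- If c₀ = a₁b₀ − a₀b₁ > 0, c₁ = a₂b₀ − a₀b₂ ≥ 0, and c₂ = a₂b₁ − a₁b₂ ≥ 0, and the denominator b₀ + b₁r + b₂r² is positive on [0, R], then f(r) = (a₀+a₁r+a₂r²)/(b₀+b₁r+b₂r²) is strictly increasing on [0, R], so the maximal SINR is attained at the power-constraint boundary r = R. -/
/-!
For `0 ≤ x < y` the cross-multiplied difference of the two values of the quotient factors as
`(y - x) * (c₀ + c₁ (x + y) + c₂ x y)`, and the second factor is positive by the sign conditions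
on `c₀, c₁, c₂`; with positive denominators this is exactly `f x < f y`.
-/

open Set

lemma quadratic_cross_mul_sub (a₀ a₁ a₂ b₀ b₁ b₂ x y : ℝ) :
    (a₀ + a₁ * y + a₂ * y ^ 2) * (b₀ + b₁ * x + b₂ * x ^ 2)
      - (a₀ + a₁ * x + a₂ * x ^ 2) * (b₀ + b₁ * y + b₂ * y ^ 2)
      = (y - x) * ((a₁ * b₀ - a₀ * b₁) + (a₂ * b₀ - a₀ * b₂) * (x + y)
          + (a₂ * b₁ - a₁ * b₂) * (x * y)) := by
  ring

lemma strictMonoOn_quadratic_div_quadratic {a₀ a₁ a₂ b₀ b₁ b₂ : ℝ} {s : Set ℝ}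
    (hs : s ⊆ Ici 0) (hden : ∀ r ∈ s, 0 < b₀ + b₁ * r + b₂ * r ^ 2)
    (hc₀ : 0 < a₁ * b₀ - a₀ * b₁) (hc₁ : 0 ≤ a₂ * b₀ - a₀ * b₂)
    (hc₂ : 0 ≤ a₂ * b₁ - a₁ * b₂) :
    StrictMonoOn (fun r ↦ (a₀ + a₁ * r + a₂ * r ^ 2) / (b₀ + b₁ * r + b₂ * r ^ 2)) s := by
  intro x hx y hy hxy
  have hx₀ : 0 ≤ x := hs hx
  have hy₀ : 0 ≤ y := hs hy
  have hfactor : 0 < (a₁ * b₀ - a₀ * b₁) + (a₂ * b₀ - a₀ * b₂) * (x + y)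
      + (a₂ * b₁ - a₁ * b₂) * (x * y) := by positivity
  have hcross := quadratic_cross_mul_sub a₀ a₁ a₂ b₀ b₁ b₂ x y
  rw [div_lt_div_iff₀ (hden x hx) (hden y hy)]
  linarith [mul_pos (sub_pos.mpr hxy) hfactor]

theorem stmt_8_general (a₀ a₁ a₂ b₀ b₁ b₂ R : ℝ)
    (hden : ∀ r ∈ Set.Icc (0 : ℝ) R, 0 < b₀ + b₁ * r + b₂ * r ^ 2)
    (hc₀ : 0 < a₁ * b₀ - a₀ * b₁) (hc₁ : 0 ≤ a₂ * b₀ - a₀ * b₂)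
    (hc₂ : 0 ≤ a₂ * b₁ - a₁ * b₂)
    (f : ℝ → ℝ)
    (hf : ∀ r, f r = (a₀ + a₁ * r + a₂ * r ^ 2) / (b₀ + b₁ * r + b₂ * r ^ 2)) :
    StrictMonoOn f (Set.Icc 0 R) ∧ ∀ x ∈ Set.Icc (0 : ℝ) R, f x ≤ f R := by
  obtain rfl : f = _ := funext hf
  have hmono := strictMonoOn_quadratic_div_quadratic (fun _ hr ↦ hr.1) hden hc₀ hc₁ hc₂
  exact ⟨hmono, fun x hx ↦ hmono.monotoneOn hx ⟨hx.1.trans hx.2, le_rfl⟩ hx.2⟩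

/-- If `c₀ > 0`, `c₁ ≥ 0`, `c₂ ≥ 0`, the SINR is strictly increasing on
`[0, R]`, so the maximum is attained at the boundary `r = R`. -/
theorem stmt_8 (a₀ a₁ a₂ b₀ b₁ b₂ R : ℝ) (hR : 0 < R)
    (hden : ∀ r ∈ Set.Icc (0 : ℝ) R, 0 < b₀ + b₁ * r + b₂ * r ^ 2)
    (hc₀ : 0 < a₁ * b₀ - a₀ * b₁) (hc₁ : 0 ≤ a₂ * b₀ - a₀ * b₂)
    (hc₂ : 0 ≤ a₂ * b₁ - a₁ * b₂)
    (f : ℝ → ℝ)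
    (hf : ∀ r, f r = (a₀ + a₁ * r + a₂ * r ^ 2) / (b₀ + b₁ * r + b₂ * r ^ 2)) :
    StrictMonoOn f (Set.Icc 0 R) ∧ ∀ x ∈ Set.Icc (0 : ℝ) R, f x ≤ f R :=
  stmt_8_general a₀ a₁ a₂ b₀ b₁ b₂ R hden hc₀ hc₁ hc₂ f hf
end

section
/- If in the UL SINR the combining vector v is orthogonal to the repeater-to-UL-AP channel h_u (vᴴh_u = 0), then the UL SINR is independent of the repeater gain α: SINR_u = ρ_u η_u |vᴴ g_u|² / (Σ_{j'≠j} ρ_u η_{u,j'} |vᴴ g_{u,j'}|² + Σₖ ρ_d η_{d,k} |vᴴ F w_k|² + ‖v‖²). -/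
open Finset

/-- If the combining vector `v` is orthogonal to the repeater-to-UL-AP
channel `h_u` (`vᴴ h_u = 0`), then the UL SINR (Eq. (9)) is independent of
the repeater gain `α`. -/
theorem stmt_19 (M K J : ℕ) (v hu hd : Fin M → ℂ)
    (gu : Fin J → Fin M → ℂ) (huj : Fin J → ℂ)
    (F : Matrix (Fin M) (Fin M) ℂ) (w : Fin K → Fin M → ℂ)
    (α : ℂ) (ρd ρu σr2 : ℝ) (ηd : Fin K → ℝ) (ηu : Fin J → ℝ) (j : Fin J)
    (horth : ∑ i, (starRingEnd ℂ) (v i) * hu i = 0)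
    -- composite channels
    (gbar : Fin J → Fin M → ℂ)
    (hgbar : ∀ j' i, gbar j' i = gu j' i + α * huj j' * hu i)
    (Fbar : Matrix (Fin M) (Fin M) ℂ)
    (hFbar : ∀ i i', Fbar i i' = F i i' + α * hu i * hd i') :
    ρu * ηu j * (norm (∑ i, (starRingEnd ℂ) (v i) * gbar j i)) ^ 2 /
        ((∑ j' ∈ Finset.univ.erase j,
            ρu * ηu j' * (norm (∑ i, (starRingEnd ℂ) (v i) * gbar j' i)) ^ 2)
          + (∑ k, ρd * ηd k *
              (norm (∑ i, (starRingEnd ℂ) (v i) * ∑ i', Fbar i i' * w k i')) ^ 2)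
          + σr2 * (norm (α * ∑ i, (starRingEnd ℂ) (v i) * hu i)) ^ 2
          + ∑ i, (norm (v i)) ^ 2)
      =
    ρu * ηu j * (norm (∑ i, (starRingEnd ℂ) (v i) * gu j i)) ^ 2 /
        ((∑ j' ∈ Finset.univ.erase j,
            ρu * ηu j' * (norm (∑ i, (starRingEnd ℂ) (v i) * gu j' i)) ^ 2)
          + (∑ k, ρd * ηd k *
              (norm (∑ i, (starRingEnd ℂ) (v i) * ∑ i', F i i' * w k i')) ^ 2)
          + ∑ i, (norm (v i)) ^ 2) := by

  have hg : ∀ j', (∑ i, (starRingEnd ℂ) (v i) * gbar j' i)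
      = ∑ i, (starRingEnd ℂ) (v i) * gu j' i := by
    intro j'
    have : ∑ i, (starRingEnd ℂ) (v i) * gbar j' i
        = (∑ i, (starRingEnd ℂ) (v i) * gu j' i)
          + α * huj j' * ∑ i, (starRingEnd ℂ) (v i) * hu i := by
      rw [Finset.mul_sum, ← Finset.sum_add_distrib]
      exact Finset.sum_congr rfl (fun i _ => by rw [hgbar]; ring)
    rw [this, horth, mul_zero, add_zero]
  have hF : ∀ k, (∑ i, (starRingEnd ℂ) (v i) * ∑ i', Fbar i i' * w k i')
      = ∑ i, (starRingEnd ℂ) (v i) * ∑ i', F i i' * w k i' := by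
    intro k
    have : ∑ i, (starRingEnd ℂ) (v i) * ∑ i', Fbar i i' * w k i'
        = (∑ i, (starRingEnd ℂ) (v i) * ∑ i', F i i' * w k i')
          + (∑ i, (starRingEnd ℂ) (v i) * hu i) * (α * ∑ i', hd i' * w k i') := by
      rw [Finset.sum_mul, ← Finset.sum_add_distrib]
      refine Finset.sum_congr rfl (fun i _ => ?_)
      have h1 : ∑ i', Fbar i i' * w k i'
          = (∑ i', F i i' * w k i') + hu i * (α * ∑ i', hd i' * w k i') := by
        rw [Finset.mul_sum, Finset.mul_sum, ← Finset.sum_add_distrib]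
        exact Finset.sum_congr rfl (fun i' _ => by rw [hFbar]; ring)
      rw [h1]; ring
    rw [this, horth, zero_mul, add_zero]
  rw [horth]
  simp only [hg, hF, mul_zero, map_zero]
  norm_num
end
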